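/- A marking m of a finite-state machine N fails DNI if and only if there exists a place s in (the support of) m such that the singleton marking s fails DNI; equivalently, m satisfies DNI if and only if every place s ∈ dom(m) satisfies DNI. -/
import Mathlib


/- Common framework: finite-state machines (FSMs) in the sense of Gorrieri.
   Places form a type `S`, labels a type `A` with a distinguished silent label `tau`.
   A transition is a triple `(s, ℓ, m) : S × A × Option S`, where the post-set `m`
   is either a single place (`some s'`) or the empty marking θ (`none`).
   An FSM is given by a finite set `T` of such transitions. -/

variable {S A : Type*}

/-- `Tr T s ℓ m` : place `s` has a transition labeled `ℓ` to post-set `m` (a place or θ). -/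
def Tr (T : Finset (S × A × Option S)) (s : S) (ℓ : A) (m : Option S) : Prop :=
  (s, ℓ, m) ∈ T

/-- `SilentReach T tau s m` : `s ⇒ε m`, the reflexive–transitive closure of silent moves. -/
inductive SilentReach (T : Finset (S × A × Option S)) (tau : A) : S → Option S → Prop
  | refl (s : S) : SilentReach T tau s (some s)
  | step {s s' : S} {m : Option S} :
      SilentReach T tau s (some s') → Tr T s' tau m → SilentReach T tau s m

/-- Lift of a place relation to `Option S`; a pair involving θ (`none`) is related
    only when both components are θ. -/
def OptRel (R : S → S → Prop) : Option S → Option S → Prop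
  | some a, some b => R a b
  | none, none => True
  | _, _ => False

/-- `R` is a branching bisimulation on the FSM with transitions `T` and silent label `tau`. -/
def IsBranchingBisim (T : Finset (S × A × Option S)) (tau : A) (R : S → S → Prop) : Prop :=
  ∀ s1 s2, R s1 s2 →
    (∀ ℓ m1, Tr T s1 ℓ m1 →
        (ℓ = tau ∧ ∃ m2, SilentReach T tau s2 m2 ∧ OptRel R (some s1) m2 ∧ OptRel R m1 m2) ∨
        (∃ s m2, SilentReach T tau s2 (some s) ∧ Tr T s ℓ m2 ∧ R s1 s ∧ OptRel R m1 m2)) ∧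
    (∀ ℓ m2, Tr T s2 ℓ m2 →
        (ℓ = tau ∧ ∃ m1, SilentReach T tau s1 m1 ∧ OptRel R m1 (some s2) ∧ OptRel R m1 m2) ∨
        (∃ s m1, SilentReach T tau s1 (some s) ∧ Tr T s ℓ m1 ∧ R s s2 ∧ OptRel R m1 m2))

/-- Branching bisimilarity on places: `s ≈ s'` iff some branching bisimulation relates them. -/
def Bisimilar (T : Finset (S × A × Option S)) (tau : A) (s s' : S) : Prop :=
  ∃ R, IsBranchingBisim T tau R ∧ R s s'

/-- Rooted branching bisimilarity `≈_c` on places. -/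
def RootedBisimilar (T : Finset (S × A × Option S)) (tau : A) (s1 s2 : S) : Prop :=
  ∀ ℓ : A,
    (∀ m1, Tr T s1 ℓ m1 → ∃ m2, Tr T s2 ℓ m2 ∧ OptRel (Bisimilar T tau) m1 m2) ∧
    (∀ m2, Tr T s2 ℓ m2 → ∃ m1, Tr T s1 ℓ m1 ∧ OptRel (Bisimilar T tau) m1 m2)

/-- The post-set of a transition, as a marking (multiset). -/
def mpost (m : Option S) : Multiset S :=
  m.elim 0 (fun s => {s})

variable [DecidableEq S] [DecidableEq A]

/-- `Fires T m t m'` : transition `t` is enabled at marking `m` (`•t ∈ m`) and its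
    firing produces `m' = (m ⊖ •t) ⊕ t•`. -/
def Fires (T : Finset (S × A × Option S)) (m : Multiset S) (t : S × A × Option S)
    (m' : Multiset S) : Prop :=
  t ∈ T ∧ t.1 ∈ m ∧ m' = m.erase t.1 + mpost t.2.2

/-- `MStep T m ℓ m'` : marking `m` evolves to `m'` by firing some `ℓ`-labeled transition. -/
def MStep (T : Finset (S × A × Option S)) (m : Multiset S) (ℓ : A) (m' : Multiset S) : Prop :=
  ∃ t, Fires T m t m' ∧ t.2.1 = ℓ

/-- `Reach T m m'` : `m' ∈ reach(m)`, i.e. `m'` is reachable from `m` by a firing sequence. -/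
def Reach (T : Finset (S × A × Option S)) : Multiset S → Multiset S → Prop :=
  Relation.ReflTransGen (fun m m' => ∃ t, Fires T m t m')

/-- The additive closure `R^⊕` of a place relation `R`, relating markings. -/
inductive AddClosure (R : S → S → Prop) : Multiset S → Multiset S → Prop
  | zero : AddClosure R 0 0
  | cons {s1 s2 : S} {m1 m2 : Multiset S} :
      R s1 s2 → AddClosure R m1 m2 → AddClosure R (s1 ::ₘ m1) (s2 ::ₘ m2)

/-- The restricted net `N \ H`: all transitions with a label in `H` are pruned.
    (Places `s\H` of the restricted net are identified with the places `s` of `N`.) -/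
def restrictNet (T : Finset (S × A × Option S)) (H : Finset A) : Finset (S × A × Option S) :=
  T.filter (fun t => t.2.1 ∉ H)

/-- `DNI T tau H m0` : for all markings `m1, m2` reachable from `m0` and every `h ∈ H`
    with `m1 →h m2`, the restricted markings are branching team equivalent in `N \ H`. -/
def DNI (T : Finset (S × A × Option S)) (tau : A) (H : Finset A) (m0 : Multiset S) : Prop :=
  ∀ m1 m2, Reach T m0 m1 → Reach T m0 m2 →
    ∀ h ∈ H, MStep T m1 h m2 → AddClosure (Bisimilar (restrictNet T H) tau) m1 m2

/-- `FiresSeq T m σ m'` : the transition sequence `σ` can fire from `m` ending in `m'`. -/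
inductive FiresSeq (T : Finset (S × A × Option S)) : Multiset S → List (S × A × Option S) → Multiset S → Prop
  | nil (m : Multiset S) : FiresSeq T m [] m
  | cons {m m' m'' : Multiset S} {t : S × A × Option S} {σ : List (S × A × Option S)} :
      Fires T m t m' → FiresSeq T m' σ m'' → FiresSeq T m (t :: σ) m''

section AuxProofs

variable {S A : Type*}

/-! ### OptRel lemmas -/

lemma optRel_flip {R : S → S → Prop} {x y : Option S} :
    OptRel (flip R) x y ↔ OptRel R y x := by
  cases x <;> cases y <;> simp [OptRel, flip]

lemma optRel_comp {R R' : S → S → Prop} {x y z : Option S}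
    (h1 : OptRel R x y) (h2 : OptRel R' y z) :
    OptRel (fun a c => ∃ b, R a b ∧ R' b c) x z := by
  cases x <;> cases y <;> cases z <;> simp [OptRel] at * <;> exact ⟨_, h1, h2⟩

lemma optRel_congr {R R' : S → S → Prop} (h : ∀ a b, R a b ↔ R' a b) {x y : Option S} :
    OptRel R x y ↔ OptRel R' x y := by
  cases x <;> cases y <;> simp [OptRel, h]

/-! ### SilentReach lemmas -/

lemma SilentReach.trans' {T : Finset (S × A × Option S)} {tau : A} {s s' : S} {m : Option S}
    (h1 : SilentReach T tau s (some s')) (h2 : SilentReach T tau s' m) :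
    SilentReach T tau s m := by
  induction h2 with
  | refl => exact h1
  | step h t ih => exact SilentReach.step ih t

/-! ### Half of being a branching bisimulation -/

def BBHalf (T : Finset (S × A × Option S)) (tau : A) (R : S → S → Prop) : Prop :=
  ∀ s1 s2, R s1 s2 → ∀ ℓ m1, Tr T s1 ℓ m1 →
    (ℓ = tau ∧ ∃ m2, SilentReach T tau s2 m2 ∧ OptRel R (some s1) m2 ∧ OptRel R m1 m2) ∨
    (∃ s m2, SilentReach T tau s2 (some s) ∧ Tr T s ℓ m2 ∧ R s1 s ∧ OptRel R m1 m2)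

lemma bbHalf_congr {T : Finset (S × A × Option S)} {tau : A} {R R' : S → S → Prop}
    (h : ∀ a b, R a b ↔ R' a b) (hR : BBHalf T tau R) : BBHalf T tau R' := by
  have : R' = R := by funext a b; exact propext (h a b).symm
  subst this; exact hR

lemma isBranchingBisim_iff {T : Finset (S × A × Option S)} {tau : A} {R : S → S → Prop} :
    IsBranchingBisim T tau R ↔ BBHalf T tau R ∧ BBHalf T tau (flip R) := by
  constructor
  · intro h
    refine ⟨fun s1 s2 hR ℓ m1 ht => (h s1 s2 hR).1 ℓ m1 ht, ?_⟩
    intro s2 s1 hR ℓ m2 ht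
    rcases (h s1 s2 hR).2 ℓ m2 ht with ⟨he, m1, hr, h1, h2⟩ | ⟨s, m1, hr, ht', h1, h2⟩
    · exact Or.inl ⟨he, m1, hr, optRel_flip.2 h1, optRel_flip.2 h2⟩
    · exact Or.inr ⟨s, m1, hr, ht', h1, optRel_flip.2 h2⟩
  · rintro ⟨h1, h2⟩ s1 s2 hR
    refine ⟨fun ℓ m1 ht => h1 s1 s2 hR ℓ m1 ht, ?_⟩
    intro ℓ m2 ht
    rcases h2 s2 s1 hR ℓ m2 ht with ⟨he, m1, hr, ha, hb⟩ | ⟨s, m1, hr, ht', ha, hb⟩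
    · exact Or.inl ⟨he, m1, hr, optRel_flip.1 ha, optRel_flip.1 hb⟩
    · exact Or.inr ⟨s, m1, hr, ht', ha, optRel_flip.1 hb⟩

/-! ### Stuttering lemma -/

lemma bbHalf_stutter_aux {T : Finset (S × A × Option S)} {tau : A} {R : S → S → Prop}
    (hR : BBHalf T tau R) {t : S} {mo : Option S} (h : SilentReach T tau t mo) :
    ∀ t', mo = some t' → ∀ u, R t u →
      ∃ u', SilentReach T tau u (some u') ∧ R t' u' := by
  induction h with
  | refl =>
    rintro t' ht u hu
    cases ht
    exact ⟨u, SilentReach.refl _, hu⟩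
  | @step x mm hsx htr ih =>
    rintro t' rfl u hu
    obtain ⟨ux, hux, hRx⟩ := ih x rfl u hu
    rcases hR x ux hRx tau (some t') htr with
      ⟨-, m2, hreach, hh1, hh2⟩ | ⟨s', m2, hreach, htr', hR1, hh2⟩
    · cases m2 with
      | none => exact hh1.elim
      | some u' => exact ⟨u', hux.trans' hreach, hh2⟩
    · cases m2 with
      | none => exact hh2.elim
      | some u' => exact ⟨u', hux.trans' (SilentReach.step hreach htr'), hh2⟩

lemma bbHalf_stutter {T : Finset (S × A × Option S)} {tau : A} {R : S → S → Prop}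
    (hR : BBHalf T tau R) {t u t' : S} (htu : R t u) (h : SilentReach T tau t (some t')) :
    ∃ u', SilentReach T tau u (some u') ∧ R t' u' :=
  bbHalf_stutter_aux hR h t' rfl u htu

/-! ### Composition of halves -/

lemma bbHalf_comp {T : Finset (S × A × Option S)} {tau : A} {R R' : S → S → Prop}
    (hR : BBHalf T tau R) (hR' : BBHalf T tau R') :
    BBHalf T tau (fun a c => ∃ b, R a b ∧ R' b c) := by
  rintro s u ⟨t, hst, htu⟩ ℓ m1 htr
  rcases hR s t hst ℓ m1 htr with ⟨rfl, mt, hreach, h1, h2⟩ | ⟨t1, mt2, hreach, htr2, hR1, h2⟩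
  · -- case A : stuttering answer by t
    cases mt with
    | none => exact h1.elim
    | some tstar =>
      obtain ⟨ustar, hus, hR's⟩ := bbHalf_stutter hR' htu hreach
      cases m1 with
      | none => exact h2.elim
      | some s' =>
        exact Or.inl ⟨rfl, some ustar, hus, ⟨tstar, h1, hR's⟩, ⟨tstar, h2, hR's⟩⟩
  · -- case B
    obtain ⟨u1, hu1, hR'1⟩ := bbHalf_stutter hR' htu hreach
    rcases hR' t1 u1 hR'1 ℓ mt2 htr2 with
      ⟨rfl, mu, hreach2, hb1, hb2⟩ | ⟨u2, mu, hreach2, htr3, hR'2, hb2⟩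
    · cases mu with
      | none => exact hb1.elim
      | some u2 =>
        refine Or.inl ⟨rfl, some u2, hu1.trans' hreach2, ⟨t1, hR1, hb1⟩, ?_⟩
        exact optRel_comp h2 hb2
    · exact Or.inr ⟨u2, mu, hu1.trans' hreach2, htr3, ⟨t1, hR1, hR'2⟩, optRel_comp h2 hb2⟩

/-! ### Bisimilar is an equivalence -/

lemma optRel_eq_refl (m : Option S) : OptRel (Eq : S → S → Prop) m m := by
  cases m <;> simp [OptRel]

lemma isBranchingBisim_eq (T : Finset (S × A × Option S)) (tau : A) :
    IsBranchingBisim T tau (Eq : S → S → Prop) := by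
  rintro s1 s2 rfl
  constructor
  · intro ℓ m1 ht
    exact Or.inr ⟨s1, m1, SilentReach.refl s1, ht, rfl, optRel_eq_refl m1⟩
  · intro ℓ m2 ht
    exact Or.inr ⟨s1, m2, SilentReach.refl s1, ht, rfl, optRel_eq_refl m2⟩

lemma bisimilar_refl (T : Finset (S × A × Option S)) (tau : A) (s : S) :
    Bisimilar T tau s s :=
  ⟨Eq, isBranchingBisim_eq T tau, rfl⟩

lemma bisimilar_symm {T : Finset (S × A × Option S)} {tau : A} {s s' : S}
    (h : Bisimilar T tau s s') : Bisimilar T tau s' s := by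
  obtain ⟨R, hR, hss⟩ := h
  refine ⟨flip R, ?_, hss⟩
  rw [isBranchingBisim_iff] at hR ⊢
  exact ⟨hR.2, bbHalf_congr (fun a b => Iff.rfl) hR.1⟩

lemma bisimilar_trans {T : Finset (S × A × Option S)} {tau : A} {a b c : S}
    (h1 : Bisimilar T tau a b) (h2 : Bisimilar T tau b c) : Bisimilar T tau a c := by
  obtain ⟨R, hR, hab⟩ := h1
  obtain ⟨R', hR', hbc⟩ := h2
  rw [isBranchingBisim_iff] at hR hR'
  refine ⟨fun x z => ∃ y, R x y ∧ R' y z, ?_, ⟨b, hab, hbc⟩⟩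
  rw [isBranchingBisim_iff]
  refine ⟨bbHalf_comp hR.1 hR'.1, ?_⟩
  have := bbHalf_comp hR'.2 hR.2
  exact bbHalf_congr (fun x z => by
    simp only [flip]; exact ⟨fun ⟨y, h1, h2⟩ => ⟨y, h2, h1⟩, fun ⟨y, h1, h2⟩ => ⟨y, h2, h1⟩⟩) this

end AuxProofs

section AuxProofs2

variable {S A : Type*} [DecidableEq S] [DecidableEq A]

/-! ### AddClosure = Multiset.Rel -/

lemma addClosure_iff_rel {R : S → S → Prop} {m1 m2 : Multiset S} :
    AddClosure R m1 m2 ↔ Multiset.Rel R m1 m2 := by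
  constructor
  · intro h
    induction h with
    | zero => exact Multiset.Rel.zero
    | cons h _ ih => exact Multiset.Rel.cons h ih
  · intro h
    induction h with
    | zero => exact AddClosure.zero
    | cons h _ ih => exact AddClosure.cons h ih

lemma rel_cancel_cons {R : S → S → Prop}
    (htrans : ∀ a b c, R a b → R b c → R a c) {a : S} {x y : Multiset S}
    (h : Multiset.Rel R (a ::ₘ x) (a ::ₘ y)) : Multiset.Rel R x y := by
  obtain ⟨b, y', hab, hxy', heq⟩ := Multiset.rel_cons_left.1 h
  rcases Multiset.cons_eq_cons.1 heq with ⟨rfl, rfl⟩ | ⟨-, c, rfl, rfl⟩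
  · exact hxy'
  · obtain ⟨a', x', ha'a, hx'c, rfl⟩ := Multiset.rel_cons_right.1 hxy'
    exact Multiset.Rel.cons (htrans _ _ _ ha'a hab) hx'c

lemma rel_cancel_add {R : S → S → Prop}
    (htrans : ∀ a b c, R a b → R b c → R a c) (rest : Multiset S) :
    ∀ n1 n2 : Multiset S, Multiset.Rel R (n1 + rest) (n2 + rest) → Multiset.Rel R n1 n2 := by
  induction rest using Multiset.induction_on with
  | empty => intro n1 n2 h; simpa using h
  | cons a rest ih =>
    intro n1 n2 h
    rw [Multiset.add_cons, Multiset.add_cons] at h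
    exact ih n1 n2 (rel_cancel_cons htrans h)

/-! ### Fires / Reach structural lemmas -/

lemma fires_add_right {T : Finset (S × A × Option S)} {x x' : Multiset S}
    {t : S × A × Option S} (h : Fires T x t x') (y : Multiset S) :
    Fires T (x + y) t (x' + y) := by
  refine ⟨h.1, Multiset.mem_add.2 (Or.inl h.2.1), ?_⟩
  rw [Multiset.erase_add_left_pos _ h.2.1, h.2.2, add_right_comm]

lemma reach_add {T : Finset (S × A × Option S)} {x x' y y' : Multiset S}
    (hx : Reach T x x') (hy : Reach T y y') : Reach T (x + y) (x' + y') := by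
  have h1 : Reach T (x + y) (x' + y) := by
    induction hx with
    | refl => exact Relation.ReflTransGen.refl
    | tail _ hstep ih =>
      obtain ⟨t, ht⟩ := hstep
      exact ih.tail ⟨t, fires_add_right ht y⟩
  have h2 : Reach T (x' + y) (x' + y') := by
    induction hy with
    | refl => exact Relation.ReflTransGen.refl
    | tail _ hstep ih =>
      obtain ⟨t, ht⟩ := hstep
      refine ih.tail ⟨t, ?_⟩
      rw [add_comm x', add_comm x']
      exact fires_add_right ht x'
  exact h1.trans h2

lemma fires_decomp {T : Finset (S × A × Option S)} {x y m' : Multiset S}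
    {t : S × A × Option S} (h : Fires T (x + y) t m') :
    (∃ x', Fires T x t x' ∧ m' = x' + y) ∨ (∃ y', Fires T y t y' ∧ m' = x + y') := by
  obtain ⟨hT, hmem, heq⟩ := h
  rcases Multiset.mem_add.1 hmem with hx | hy
  · refine Or.inl ⟨x.erase t.1 + mpost t.2.2, ⟨hT, hx, rfl⟩, ?_⟩
    rw [heq, Multiset.erase_add_left_pos _ hx, add_right_comm]
  · refine Or.inr ⟨y.erase t.1 + mpost t.2.2, ⟨hT, hy, rfl⟩, ?_⟩
    rw [heq, Multiset.erase_add_right_pos _ hy, add_assoc]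

lemma reach_decomp {T : Finset (S × A × Option S)} {x y m' : Multiset S}
    (h : Reach T (x + y) m') :
    ∃ x' y', Reach T x x' ∧ Reach T y y' ∧ m' = x' + y' := by
  induction h with
  | refl => exact ⟨x, y, Relation.ReflTransGen.refl, Relation.ReflTransGen.refl, rfl⟩
  | tail _ hstep ih =>
    obtain ⟨x', y', hx, hy, rfl⟩ := ih
    obtain ⟨t, ht⟩ := hstep
    rcases fires_decomp ht with ⟨x'', hf, rfl⟩ | ⟨y'', hf, rfl⟩
    · exact ⟨x'', y', hx.tail ⟨t, hf⟩, hy, rfl⟩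
    · exact ⟨x', y'', hx, hy.tail ⟨t, hf⟩, rfl⟩

lemma reach_zero {T : Finset (S × A × Option S)} {m1 : Multiset S}
    (h : Reach T 0 m1) : m1 = 0 := by
  induction h with
  | refl => rfl
  | tail _ hstep ih =>
    subst ih
    obtain ⟨t, -, hmem, -⟩ := hstep
    exact absurd hmem (Multiset.notMem_zero _)

lemma reach_component {T : Finset (S × A × Option S)} :
    ∀ (m m1 : Multiset S), Reach T m m1 → ∀ p ∈ m1,
      ∃ s ∈ m, ∃ a b : Multiset S, Reach T {s} a ∧ p ∈ a ∧
        Reach T (m.erase s) b ∧ m1 = a + b := by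
  intro m
  induction m using Multiset.induction_on with
  | empty =>
    intro m1 h p hp
    rw [reach_zero h] at hp
    exact absurd hp (Multiset.notMem_zero _)
  | cons s m0 ih =>
    intro m1 h p hp
    rw [← Multiset.singleton_add] at h
    obtain ⟨a0, b0, ha0, hb0, rfl⟩ := reach_decomp h
    rcases Multiset.mem_add.1 hp with hpa | hpb
    · exact ⟨s, Multiset.mem_cons_self s m0, a0, b0, ha0, hpa, by
        rw [Multiset.erase_cons_head]; exact hb0, rfl⟩
    · obtain ⟨s', hs', a, b, ha, hp', hb, rfl⟩ := ih b0 hb0 p hpb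
      have key : (s ::ₘ m0).erase s' = s ::ₘ m0.erase s' := by
        by_cases hss : s' = s
        · subst hss
          rw [Multiset.erase_cons_head]
          exact (Multiset.cons_erase hs').symm
        · exact Multiset.erase_cons_tail _ (fun hh => hss hh.symm)
      refine ⟨s', Multiset.mem_cons_of_mem hs', a, a0 + b, ha, hp', ?_, by
        rw [← add_assoc, add_comm a0 a, add_assoc]⟩
      rw [key, ← Multiset.singleton_add]
      exact reach_add ha0 hb

end AuxProofs2


/-- a marking `m` satisfies DNI iff every place in (the support of) `m`,
    as a singleton marking, satisfies DNI. -/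
theorem dni_iff_components [Fintype S] [Fintype A] [DecidableEq S] [DecidableEq A]
    (T : Finset (S × A × Option S)) (tau : A) (H : Finset A) (htau : tau ∉ H)
    (m : Multiset S) :
    DNI T tau H m ↔ ∀ s ∈ m, DNI T tau H ({s} : Multiset S) := by
  set B := Bisimilar (restrictNet T H) tau with hB
  have htrans : ∀ a b c : S, B a b → B b c → B a c := fun a b c => bisimilar_trans
  constructor
  · -- DNI m → components
    intro hm s hs n1 n2 hr1 hr2 h hH hstep
    set rest := m.erase s with hrest
    have hmeq : m = s ::ₘ rest := (Multiset.cons_erase hs).symm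
    have hR1 : Reach T m (n1 + rest) := by
      rw [hmeq, ← Multiset.singleton_add]
      exact reach_add hr1 Relation.ReflTransGen.refl
    have hR2 : Reach T m (n2 + rest) := by
      rw [hmeq, ← Multiset.singleton_add]
      exact reach_add hr2 Relation.ReflTransGen.refl
    have hstep' : MStep T (n1 + rest) h (n2 + rest) := by
      obtain ⟨t, ⟨hT, hmem, heq⟩, hl⟩ := hstep
      refine ⟨t, ⟨hT, Multiset.mem_add.2 (Or.inl hmem), ?_⟩, hl⟩
      rw [Multiset.erase_add_left_pos _ hmem, heq, add_right_comm]
    have := hm (n1 + rest) (n2 + rest) hR1 hR2 h hH hstep'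
    rw [addClosure_iff_rel] at this ⊢
    exact rel_cancel_add htrans rest n1 n2 this
  · -- components → DNI m
    intro hcomp m1 m2 hr1 hr2 h hH hstep
    obtain ⟨t, ⟨hT, hmem, heq⟩, hl⟩ := hstep
    obtain ⟨s, hs, a, b, ha, hpa, hb, rfl⟩ := reach_component m m1 hr1 t.1 hmem
    set a' := a.erase t.1 + mpost t.2.2 with ha'
    have hfa : Fires T a t a' := ⟨hT, hpa, rfl⟩
    have hm2 : m2 = a' + b := by
      rw [heq, Multiset.erase_add_left_pos _ hpa, add_right_comm]
    have hra' : Reach T ({s} : Multiset S) a' := ha.tail ⟨t, hfa⟩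
    have hAA : AddClosure B a a' :=
      hcomp s hs a a' ha hra' h hH ⟨t, hfa, hl⟩
    rw [hm2, addClosure_iff_rel] at *
    exact Multiset.Rel.add hAA (Multiset.rel_refl_of_refl_on
      (fun x _ => bisimilar_refl (restrictNet T H) tau x))
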